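/- arXiv:2011.03211 — 4 statements merged into one kernel-verified Lean document; each statement's English description precedes it below -/
import Mathlib

section
/- Let f : G → ℝ be bounded, Borel measurable and nonnegative, and let φ, φ̃ ∈ C_00(G) be nonnegative and not identically zero. Then a function h : G → ℝ is G-dominated by φ*f if and only if h is G-dominated by φ̃*f. -/
open MeasureTheory Topology Pointwise
open scoped ENNReal

variable {G : Type*}

section Defs

variable [Group G] [TopologicalSpace G] [MeasurableSpace G]

/-- Convolution of a (positive Borel) measure `μ` with a function `f`:
`(μ * f)(x) = ∫_G f(y⁻¹ x) dμ(y)`. -/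
noncomputable def mConv (μ : Measure G) (f : G → ℝ) : G → ℝ :=
  fun x => ∫ y, f (y⁻¹ * x) ∂μ

/-- Convolution of two functions with respect to a reference measure `m`:
`(φ * f)(x) = ∫_G φ(y) f(y⁻¹ x) dm(y)`. -/
noncomputable def fConv (m : Measure G) (φ f : G → ℝ) : G → ℝ :=
  fun x => ∫ y, φ y * f (y⁻¹ * x) ∂m

/-- A real-valued function is bounded. -/
def IsBdd (f : G → ℝ) : Prop := ∃ C : ℝ, ∀ x, |f x| ≤ C

/-- `M₀₀(G)₊`: finite positive regular Borel measures with compact support. -/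
def MComp (μ : Measure G) : Prop :=
  IsFiniteMeasure μ ∧ μ.Regular ∧ ∃ K : Set G, IsCompact K ∧ μ Kᶜ = 0

/-- `h` is `G`-dominated by `f`. -/
def GDom (f h : G → ℝ) : Prop :=
  ∃ (n : ℕ) (t : Fin n → ℝ) (g : Fin n → G),
    (∀ j, 0 ≤ t j) ∧ ∀ x, |h x| ≤ ∑ j, t j * f ((g j)⁻¹ * x)

/-- `h` is measurably dominated by `f`. -/
def MDom (f h : G → ℝ) : Prop :=
  ∃ μ : Measure G, MComp μ ∧ ∀ x, |h x| ≤ mConv μ f x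

/-- The `G`-dominated "norm" `p_f`. -/
noncomputable def pNorm (f h : G → ℝ) : ℝ :=
  sInf {s : ℝ | ∃ (n : ℕ) (t : Fin n → ℝ) (g : Fin n → G),
    (∀ j, 0 ≤ t j) ∧ (∀ x, |h x| ≤ ∑ j, t j * f ((g j)⁻¹ * x)) ∧ s = ∑ j, t j}

/-- The measurably dominated "norm" `p̄_f`. -/
noncomputable def pBar (f h : G → ℝ) : ℝ :=
  sInf {s : ℝ | ∃ μ : Measure G, MComp μ ∧ (∀ x, |h x| ≤ mConv μ f x) ∧
    s = (μ Set.univ).toReal}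

/-- Bounded right uniformly continuous real functions on `G`. -/
def RUCb (f : G → ℝ) : Prop :=
  IsBdd f ∧ Continuous f ∧
    ∀ ε : ℝ, 0 < ε → ∃ U ∈ 𝓝 (1 : G), ∀ g ∈ U, ∀ x, |f (g⁻¹ * x) - f x| < ε

/-- Bounded left uniformly continuous real functions on `G`. -/
def LUCb (f : G → ℝ) : Prop :=
  IsBdd f ∧ Continuous f ∧
    ∀ ε : ℝ, 0 < ε → ∃ U ∈ 𝓝 (1 : G), ∀ g ∈ U, ∀ x, |f (x * g) - f x| < ε

end Defs

/-!
If `ψ ≥ 0` is continuous and not identically zero, `ψ` exceeds some `c > 0` on an open set, and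
finitely many left translates of that set cover the compact support of a bounded `φ`; hence `φ` is
`G`-dominated by `ψ`. Convolving on the right with `f ≥ 0` is monotone and commutes with left
translations, so `φ * f` is `G`-dominated by `ψ * f`. Since `G`-domination is transitive, applying
this with the roles of `φ` and `φ̃` exchanged gives both implications.
-/

section GDom

variable [Group G]

lemma gDom_of_fintype {ι : Type*} [Fintype ι] {f h : G → ℝ} (t : ι → ℝ) (g : ι → G)
    (ht : ∀ i, 0 ≤ t i) (hb : ∀ x, |h x| ≤ ∑ i, t i * f ((g i)⁻¹ * x)) : GDom f h := by
  let e := Fintype.equivFin ι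
  exact ⟨Fintype.card ι, t ∘ e.symm, g ∘ e.symm, fun j => ht _,
    fun x => (hb x).trans_eq (e.symm.sum_comp fun i => t i * f ((g i)⁻¹ * x)).symm⟩

lemma GDom.trans {f₁ f₂ h : G → ℝ} (h₂₁ : GDom f₂ f₁) (h₁ : GDom f₁ h) : GDom f₂ h := by
  obtain ⟨n, t, g, ht, hb⟩ := h₁
  obtain ⟨N, s, g', hs, hb'⟩ := h₂₁
  refine gDom_of_fintype (fun p : Fin n × Fin N => t p.1 * s p.2) (fun p => g p.1 * g' p.2)
    (fun p => mul_nonneg (ht _) (hs _)) fun x => ?_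
  calc |h x| ≤ ∑ j, t j * f₁ ((g j)⁻¹ * x) := hb x
    _ ≤ ∑ j, t j * ∑ k, s k * f₂ ((g' k)⁻¹ * ((g j)⁻¹ * x)) :=
        Finset.sum_le_sum fun j _ =>
          mul_le_mul_of_nonneg_left ((le_abs_self _).trans (hb' _)) (ht j)
    _ = ∑ p : Fin n × Fin N, t p.1 * s p.2 * f₂ ((g p.1 * g' p.2)⁻¹ * x) := by
        simp only [Fintype.sum_prod_type, Finset.mul_sum, mul_inv_rev, mul_assoc]

lemma gDom_of_hasCompactSupport [TopologicalSpace G] [ContinuousMul G] {φ ψ : G → ℝ}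
    (hφc : Continuous φ) (hφs : HasCompactSupport φ) (hψc : Continuous ψ) (hψ0 : ∀ x, 0 ≤ ψ x)
    (hψne : ψ ≠ 0) : GDom ψ φ := by
  obtain ⟨y₀, hy₀⟩ : ∃ y₀, 0 < ψ y₀ := by
    obtain ⟨y₀, hy₀⟩ := Function.ne_iff.1 hψne
    exact ⟨y₀, (hψ0 y₀).lt_of_ne' hy₀⟩
  set c := ψ y₀ / 2
  have hc : 0 < c := by positivity
  obtain ⟨M, hM⟩ := hφs.exists_bound_of_continuous hφc
  have hM0 : 0 ≤ M := (norm_nonneg _).trans (hM 1)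
  obtain ⟨τ, hτ⟩ := hφs.elim_finite_subcover (fun g : G => {y | c < ψ (g⁻¹ * y)})
    (fun g => isOpen_lt continuous_const (hψc.comp (continuous_const_mul g⁻¹)))
    (fun x _ => Set.mem_iUnion.2 ⟨x * y₀⁻¹, by simp [c, hy₀]⟩)
  refine gDom_of_fintype (fun _ : τ => M / c) Subtype.val (fun _ => by positivity) fun x => ?_
  by_cases hx : x ∈ tsupport φ
  · obtain ⟨g, hg, hgx⟩ := Set.mem_iUnion₂.1 (hτ hx)
    calc |φ x| ≤ M / c * c := by rw [div_mul_cancel₀ _ hc.ne']; exact hM x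
      _ ≤ M / c * ψ (g⁻¹ * x) := mul_le_mul_of_nonneg_left hgx.le (by positivity)
      _ ≤ ∑ g : τ, M / c * ψ ((g : G)⁻¹ * x) :=
        Finset.single_le_sum (f := fun g : τ => M / c * ψ ((g : G)⁻¹ * x))
          (fun g _ => mul_nonneg (by positivity) (hψ0 _)) (Finset.mem_univ ⟨g, hg⟩)
  · rw [image_eq_zero_of_notMem_tsupport hx, abs_zero]
    exact Finset.sum_nonneg fun g _ => mul_nonneg (by positivity) (hψ0 _)

end GDom

section Convolution

variable [Group G] [MeasurableSpace G] [MeasurableMul G] {m : Measure G} {f : G → ℝ}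

lemma integrable_fConv_integrand [MeasurableInv G] {ψ : G → ℝ} (hψ : Integrable ψ m)
    (hfm : Measurable f) (hfb : IsBdd f) (x : G) : Integrable (fun y => ψ y * f (y⁻¹ * x)) m := by
  obtain ⟨C, hC⟩ := hfb
  exact hψ.mul_bdd (hfm.comp (measurable_inv.mul_const x)).aestronglyMeasurable
    (Filter.Eventually.of_forall fun y => hC _)

lemma fConv_comp_mul_left [m.IsMulLeftInvariant] (ψ : G → ℝ) (g x : G) :
    fConv m (fun y => ψ (g⁻¹ * y)) f x = fConv m ψ f (g⁻¹ * x) := by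
  unfold fConv
  rw [← integral_mul_left_eq_self _ g]
  simp only [inv_mul_cancel_left, mul_inv_rev, mul_assoc]

lemma GDom.fConv_left [MeasurableInv G] [m.IsMulLeftInvariant] {φ ψ : G → ℝ}
    (hfm : Measurable f) (hfb : IsBdd f) (hf0 : ∀ x, 0 ≤ f x) (hψ : Integrable ψ m)
    (hdom : GDom ψ φ) :
    GDom (fConv m ψ f) (fConv m φ f) := by
  obtain ⟨n, t, g, ht, hb⟩ := hdom
  refine ⟨n, t, g, ht, fun x => ?_⟩
  have hint : ∀ j ∈ (Finset.univ : Finset (Fin n)),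
      Integrable (fun y => t j * (ψ ((g j)⁻¹ * y) * f (y⁻¹ * x))) m := fun j _ =>
    (integrable_fConv_integrand (hψ.comp_mul_left _) hfm hfb x).const_mul _
  calc |fConv m φ f x| ≤ ∫ y, |φ y * f (y⁻¹ * x)| ∂m := abs_integral_le_integral_abs
    _ ≤ ∫ y, ∑ j, t j * (ψ ((g j)⁻¹ * y) * f (y⁻¹ * x)) ∂m := by
        refine integral_mono_of_nonneg (Filter.Eventually.of_forall fun y => abs_nonneg _)
          (integrable_finsetSum _ hint) (Filter.Eventually.of_forall fun y => ?_)
        simp only [abs_mul, abs_of_nonneg (hf0 _), ← mul_assoc, ← Finset.sum_mul]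
        exact mul_le_mul_of_nonneg_right (hb y) (hf0 _)
    _ = ∑ j, t j * fConv m ψ f ((g j)⁻¹ * x) := by
        rw [integral_finsetSum _ hint]
        refine Finset.sum_congr rfl fun j _ => ?_
        rw [integral_const_mul, ← fConv_comp_mul_left]
        rfl

end Convolution

theorem statement_6_general [Group G] [TopologicalSpace G] [IsTopologicalGroup G]
    [MeasurableSpace G] [BorelSpace G]
    (m : Measure G) [m.IsHaarMeasure]
    (f : G → ℝ) (hfm : Measurable f) (hfb : IsBdd f) (hf0 : ∀ x, 0 ≤ f x)
    (φ φ' : G → ℝ)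
    (hφc : Continuous φ) (hφs : HasCompactSupport φ)
    (hφ0 : ∀ x, 0 ≤ φ x) (hφne : φ ≠ 0)
    (hφ'c : Continuous φ') (hφ's : HasCompactSupport φ')
    (hφ'0 : ∀ x, 0 ≤ φ' x) (hφ'ne : φ' ≠ 0)
    (h : G → ℝ) :
    GDom (fConv m φ f) h ↔ GDom (fConv m φ' f) h :=
  ⟨(GDom.fConv_left hfm hfb hf0 (hφ'c.integrable_of_hasCompactSupport hφ's)
      (gDom_of_hasCompactSupport hφc hφs hφ'c hφ'0 hφ'ne)).trans,
    (GDom.fConv_left hfm hfb hf0 (hφc.integrable_of_hasCompactSupport hφs)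
      (gDom_of_hasCompactSupport hφ'c hφ's hφc hφ0 hφne)).trans⟩

theorem statement_6 [Group G] [TopologicalSpace G] [IsTopologicalGroup G] [LocallyCompactSpace G]
    [T2Space G] [MeasurableSpace G] [BorelSpace G]
    (m : Measure G) [m.IsHaarMeasure]
    (f : G → ℝ) (hfm : Measurable f) (hfb : IsBdd f) (hf0 : ∀ x, 0 ≤ f x)
    (φ φ' : G → ℝ)
    (hφc : Continuous φ) (hφs : HasCompactSupport φ)
    (hφ0 : ∀ x, 0 ≤ φ x) (hφne : φ ≠ 0)
    (hφ'c : Continuous φ') (hφ's : HasCompactSupport φ')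
    (hφ'0 : ∀ x, 0 ≤ φ' x) (hφ'ne : φ' ≠ 0)
    (h : G → ℝ) :
    GDom (fConv m φ f) h ↔ GDom (fConv m φ' f) h :=
  statement_6_general m f hfm hfb hf0 φ φ' hφc hφs hφ0 hφne hφ'c hφ's hφ'0 hφ'ne h
end

section
/- Let f, v, h : G → ℝ be bounded Borel measurable functions with f and v nonnegative, suppose h is measurably dominated by v and v is measurably dominated by f. Then h is measurably dominated by f and p̄_f(h) ≤ p̄_v(h) · p̄_f(v), i.e., inf{ν(G) : ν ∈ M_00(G)_+, |h| ≤ ν*f} ≤ inf{λ(G) : λ ∈ M_00(G)_+, |h| ≤ λ*v} · inf{μ(G) : μ ∈ M_00(G)_+, |v| ≤ μ*f}. -/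
open MeasureTheory Topology Pointwise
open scoped ENNReal

variable {G : Type*}

/-!
If `|h| ≤ λ * v` and `|v| ≤ μ * f`, then `|h| ≤ λ * (μ * f) = (λ ⋆ μ) * f`, where
`(λ ⋆ μ)(A) = ∫ μ(y⁻¹A) dλ(y)` has total mass `λ(G) μ(G)`; taking infima over `λ` and `μ` gives
`p̄_f(h) ≤ p̄_v(h) p̄_f(v)`. The substance is that `λ ⋆ μ` lies in `M₀₀(G)₊` again. It lives on
the compact set `K L` when `λ` and `μ` live on `K` and `L`. For inner regularity on an open `U`,
approximate `∫ μ(y⁻¹U) dλ(y)` from below by `∫ φ dλ` with `φ` simple; on a compact part of each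
fibre of `φ`, compactness yields one compact `D ⊆ U` with `μ(y⁻¹D)` almost `φ(y)` there.
-/

open Set Filter

theorem Real.le_sInf_mul_sInf {p : ℝ} {A B : Set ℝ} (hA : A.Nonempty) (hB : B.Nonempty)
    (hA0 : ∀ a ∈ A, 0 ≤ a) (hB0 : ∀ b ∈ B, 0 ≤ b) (h : ∀ a ∈ A, ∀ b ∈ B, p ≤ a * b) :
    p ≤ sInf A * sInf B := by
  have hpB : ∀ a ∈ A, p ≤ a * sInf B := fun a ha => by
    rw [← smul_eq_mul, ← Real.sInf_smul_of_nonneg (hA0 a ha)]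
    exact le_csInf hB.smul_set (forall_mem_image.2 fun b hb => h a ha b hb)
  rw [mul_comm, ← smul_eq_mul, ← Real.sInf_smul_of_nonneg (le_csInf hB hB0)]
  exact le_csInf hA.smul_set
    (forall_mem_image.2 fun a ha => (hpB a ha).trans_eq (mul_comm _ _))

theorem ENNReal.mul_lt_of_lt_one_left {θ a : ℝ≥0∞} (hθ : θ < 1) (ha0 : a ≠ 0) (ha : a ≠ ⊤) :
    θ * a < a := by
  simpa using ENNReal.mul_lt_mul_left ha0 ha hθ

theorem MeasureTheory.Measure.exists_isCompact_mul_le_measure {α : Type*} [TopologicalSpace α]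
    [MeasurableSpace α] (ν : Measure α) [IsFiniteMeasure ν] [ν.InnerRegularCompactLTTop]
    {A : Set α} (hA : MeasurableSet A) {θ : ℝ≥0∞} (hθ : θ < 1) :
    ∃ k ⊆ A, IsCompact k ∧ θ * ν A ≤ ν k := by
  rcases eq_or_ne (ν A) 0 with hA0 | hA0
  · exact ⟨∅, empty_subset _, isCompact_empty, by simp [hA0]⟩
  obtain ⟨k, hkA, hk, hlt⟩ := hA.exists_lt_isCompact_of_ne_top (measure_ne_top ν A)
    (ENNReal.mul_lt_of_lt_one_left hθ hA0 (measure_ne_top ν A))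
  exact ⟨k, hkA, hk, hlt.le⟩

section Monoid

variable {M : Type*} [Monoid M] [TopologicalSpace M] [ContinuousMul M]

theorem eventually_subset_preimage_mul_left {Q U : Set M} {y : M} (hQ : IsCompact Q)
    (hU : IsOpen U) (hQU : Q ⊆ (y * ·) ⁻¹' U) : ∀ᶠ y' in 𝓝 y, Q ⊆ (y' * ·) ⁻¹' U :=
  hQ.eventually_forall_of_forall_eventually fun _ hq =>
    continuous_mul.continuousAt.eventually_mem (hU.mem_nhds (hQU hq))

variable [MeasurableSpace M]

theorem lowerSemicontinuous_measure_preimage_mul_left (μ : Measure M) [μ.Regular] {U : Set M}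
    (hU : IsOpen U) :
    LowerSemicontinuous fun y => μ ((y * ·) ⁻¹' U) := fun y _ ht => by
  obtain ⟨Q, hQU, hQ, htQ⟩ := (hU.preimage (continuous_const_mul y)).exists_lt_isCompact ht
  exact (eventually_subset_preimage_mul_left hQ hU hQU).mono fun _ hy' =>
    htQ.trans_le (measure_mono hy')

theorem exists_isCompact_le_measure_preimage_mul_left [LocallyCompactSpace M] (μ : Measure M)
    [μ.Regular]
    {U k : Set M} {t : ℝ≥0∞} (hU : IsOpen U) (hk : IsCompact k)
    (ht : ∀ y ∈ k, t < μ ((y * ·) ⁻¹' U)) :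
    ∃ D ⊆ U, IsCompact D ∧ ∀ y ∈ k, t ≤ μ ((y * ·) ⁻¹' D) := by
  refine hk.induction_on ⟨∅, empty_subset _, isCompact_empty, by simp⟩
    (fun s s' hss' ⟨D, hDU, hD, hs'⟩ => ⟨D, hDU, hD, fun y hy => hs' y (hss' hy)⟩)
    (fun s s' ⟨D, hDU, hD, hs⟩ ⟨D', hDU', hD', hs'⟩ => ⟨D ∪ D', union_subset hDU hDU',
      hD.union hD', fun y hy => hy.elim
        (fun hy => (hs y hy).trans (measure_mono (preimage_mono subset_union_left)))
        (fun hy => (hs' y hy).trans (measure_mono (preimage_mono subset_union_right)))⟩)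
    fun y hy => ?_
  obtain ⟨Q, hQU, hQ, htQ⟩ :=
    (hU.preimage (continuous_const_mul y)).exists_lt_isCompact (ht y hy)
  obtain ⟨L, hL, hLU, hLc⟩ :=
    local_compact_nhds (eventually_subset_preimage_mul_left hQ hU hQU)
  refine ⟨L, mem_nhdsWithin_of_mem_nhds hL, L * Q, ?_, hLc.mul hQ,
    fun y' hy' => htQ.le.trans (measure_mono fun q hq => mul_mem_mul hy' hq)⟩
  rintro _ ⟨y', hy', q, hq, rfl⟩
  exact hLU hy' hq

variable [BorelSpace M]

theorem measurable_map_mul_left (μ : Measure M) [IsFiniteMeasure μ] [μ.Regular] :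
    Measurable fun y => μ.map (y * ·) := by
  refine .measure_of_isPiSystem BorelSpace.measurable_eq isPiSystem_isOpen (fun U hU => ?_) ?_
  · simpa only [Measure.map_apply (continuous_const_mul _).measurable hU.measurableSet] using
      (lowerSemicontinuous_measure_preimage_mul_left μ hU).measurable
  · simpa only [Measure.map_apply (continuous_const_mul _).measurable MeasurableSet.univ,
      preimage_univ] using measurable_const

/-- The convolution of measures, written as a `bind` rather than as the pushforward of `ν.prod μ`
because multiplication `M × M → M` need not be measurable for the product σ-algebra. -/
noncomputable def measureConv (ν μ : Measure M) : Measure M :=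
  ν.bind fun y => μ.map (y * ·)

variable (ν μ : Measure M) [IsFiniteMeasure μ] [μ.Regular]

theorem measureConv_apply {s : Set M} (hs : MeasurableSet s) :
    measureConv ν μ s = ∫⁻ y, μ ((y * ·) ⁻¹' s) ∂ν := by
  rw [measureConv, Measure.bind_apply hs (measurable_map_mul_left μ).aemeasurable]
  exact lintegral_congr fun y => Measure.map_apply (continuous_const_mul y).measurable hs

theorem measureConv_univ : measureConv ν μ univ = ν univ * μ univ := by
  simp only [measureConv_apply ν μ MeasurableSet.univ, preimage_univ, lintegral_const, mul_comm]

theorem lintegral_measureConv {F : M → ℝ≥0∞} (hF : Measurable F) :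
    ∫⁻ w, F w ∂measureConv ν μ = ∫⁻ y, ∫⁻ z, F (y * z) ∂μ ∂ν := by
  rw [measureConv,
    Measure.lintegral_bind (measurable_map_mul_left μ).aemeasurable hF.aemeasurable]
  exact lintegral_congr fun y => lintegral_map hF (continuous_const_mul y).measurable

instance [IsFiniteMeasure ν] : IsFiniteMeasure (measureConv ν μ) :=
  ⟨by rw [measureConv_univ]; exact ENNReal.mul_lt_top (measure_lt_top _ _) (measure_lt_top _ _)⟩

variable [T2Space M]

theorem measureConv_compl_mul_eq_zero {K L : Set M} (hK : IsCompact K) (hL : IsCompact L)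
    (hνK : ν Kᶜ = 0) (hμL : μ Lᶜ = 0) : measureConv ν μ (K * L)ᶜ = 0 := by
  rw [measureConv_apply ν μ (hK.mul hL).isClosed.measurableSet.compl]
  refine (lintegral_congr_ae ?_).trans lintegral_zero
  filter_upwards [mem_ae_iff.2 hνK] with y hy
  exact measure_mono_null (fun z hz hzL => hz (mul_mem_mul hy hzL)) hμL

variable [LocallyCompactSpace M] [IsFiniteMeasure ν] [ν.Regular]

theorem exists_isCompact_mul_mul_lintegral_le_measureConv {U : Set M} (hU : IsOpen U)
    (φ : SimpleFunc M ℝ≥0∞) (hφ : ⇑φ ≤ fun y => μ ((y * ·) ⁻¹' U)) {θ₁ θ₂ : ℝ≥0∞}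
    (h₁ : θ₁ < 1) (h₂ : θ₂ < 1) :
    ∃ K ⊆ U, IsCompact K ∧ θ₁ * (θ₂ * φ.lintegral ν) ≤ measureConv ν μ K := by
  -- `θ₁` pays for shrinking the fibres of `φ` to compacts, `θ₂` for making `φ < μ(·⁻¹U)` strict.
  choose k hkφ hk hνk using fun c =>
    ν.exists_isCompact_mul_le_measure (φ.measurableSet_fiber c) h₁
  have hD : ∀ c ∈ φ.range, ∃ D ⊆ U, IsCompact D ∧ ∀ y ∈ k c, θ₂ * c ≤ μ ((y * ·) ⁻¹' D) := by
    intro c hc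
    rcases eq_or_ne c 0 with rfl | hc0
    · exact ⟨∅, empty_subset _, isCompact_empty, by simp⟩
    refine exists_isCompact_le_measure_preimage_mul_left μ hU (hk c) fun y hy => ?_
    have hcy : c ≤ μ ((y * ·) ⁻¹' U) := (hkφ c hy : φ y = c) ▸ hφ y
    exact (ENNReal.mul_lt_of_lt_one_left h₂ hc0
      (ne_top_of_le_ne_top (measure_ne_top _ _) hcy)).trans_le hcy
  choose! D hDU hD hkD using hD
  set K := ⋃ c ∈ φ.range, D c
  have hK : IsCompact K := φ.range.finite_toSet.isCompact_biUnion hD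
  refine ⟨K, iUnion₂_subset hDU, hK, ?_⟩
  calc θ₁ * (θ₂ * φ.lintegral ν) = ∑ c ∈ φ.range, θ₂ * c * (θ₁ * ν (φ ⁻¹' {c})) := by
        simp only [SimpleFunc.lintegral, Finset.mul_sum]
        exact Finset.sum_congr rfl fun _ _ => by ring
    _ ≤ ∑ c ∈ φ.range, θ₂ * c * ν (k c) := by gcongr with c; exact hνk c
    _ ≤ ∑ c ∈ φ.range, ∫⁻ y in k c, μ ((y * ·) ⁻¹' K) ∂ν := by
        gcongr with c hc
        rw [← setLIntegral_const]
        exact setLIntegral_mono' (hk c).measurableSet fun y hy =>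
          (hkD c hc y hy).trans (measure_mono (preimage_mono (subset_biUnion_of_mem hc)))
    _ = ∫⁻ y in ⋃ c ∈ φ.range, k c, μ ((y * ·) ⁻¹' K) ∂ν :=
        (lintegral_biUnion_finset ((pairwiseDisjoint_fiber φ _).mono hkφ)
          (fun c _ => (hk c).measurableSet) _).symm
    _ ≤ ∫⁻ y, μ ((y * ·) ⁻¹' K) ∂ν := setLIntegral_le_lintegral _ _
    _ = measureConv ν μ K := (measureConv_apply ν μ hK.measurableSet).symm

theorem innerRegularWRT_measureConv : (measureConv ν μ).InnerRegularWRT IsCompact IsOpen := by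
  intro U hU r hr
  have hsup : measureConv ν μ U ≤ ⨆ (K) (_ : K ⊆ U ∧ IsCompact K), measureConv ν μ K := by
    rw [measureConv_apply ν μ hU.measurableSet, lintegral]
    refine iSup₂_le fun φ hφ => ENNReal.le_of_forall_lt_one_mul_le fun θ₂ h₂ =>
      ENNReal.le_of_forall_lt_one_mul_le fun θ₁ h₁ => ?_
    obtain ⟨K, hKU, hK, hle⟩ := exists_isCompact_mul_mul_lintegral_le_measureConv ν μ hU φ hφ h₁ h₂
    exact le_iSup₂_of_le K ⟨hKU, hK⟩ hle
  obtain ⟨K, hK⟩ := lt_iSup_iff.1 (hr.trans_le hsup)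
  obtain ⟨⟨hKU, hKc⟩, hrK⟩ := lt_iSup_iff.1 hK
  exact ⟨K, hKU, hKc, hrK⟩

instance : (measureConv ν μ).Regular where
  lt_top_of_isCompact _ _ := measure_lt_top _ _
  innerRegular := innerRegularWRT_measureConv ν μ
  toOuterRegular := (Measure.InnerRegularWRT.weaklyRegular_of_finite _ <|
    (innerRegularWRT_measureConv ν μ).mono (fun _ => id) fun _ hK => hK.isClosed).toOuterRegular

end Monoid

theorem MComp.measureConv [Monoid G] [TopologicalSpace G] [ContinuousMul G] [T2Space G]
    [LocallyCompactSpace G] [MeasurableSpace G] [BorelSpace G] {ν μ : Measure G} (hν : MComp ν)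
    (hμ : MComp μ) :
    MComp (measureConv ν μ) := by
  obtain ⟨_, _, K, hK, hνK⟩ := hν
  obtain ⟨_, _, L, hL, hμL⟩ := hμ
  exact ⟨inferInstance, inferInstance, K * L, hK.mul hL,
    measureConv_compl_mul_eq_zero ν μ hK hL hνK hμL⟩

section Group

variable [Group G] [MeasurableSpace G]

theorem enorm_mConv_le (μ : Measure G) (f : G → ℝ) (x : G) :
    ‖mConv μ f x‖ₑ ≤ ∫⁻ y, ‖f (y⁻¹ * x)‖ₑ ∂μ :=
  enorm_integral_le_lintegral_enorm _

variable [TopologicalSpace G]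

theorem pBar_le {f h : G → ℝ} {ν : Measure G} (hν : MComp ν)
    (hνh : ∀ x, |h x| ≤ mConv ν f x) :
    pBar f h ≤ (ν univ).toReal :=
  csInf_le ⟨0, by rintro _ ⟨_, _, _, rfl⟩; exact ENNReal.toReal_nonneg⟩ ⟨ν, hν, hνh, rfl⟩

variable [IsTopologicalGroup G] [BorelSpace G]

theorem ofReal_mConv_eq_lintegral (μ : Measure G) [IsFiniteMeasure μ] {f : G → ℝ}
    (hfm : Measurable f) (hfb : IsBdd f) (hf0 : ∀ x, 0 ≤ f x) (x : G) :
    ENNReal.ofReal (mConv μ f x) = ∫⁻ y, ‖f (y⁻¹ * x)‖ₑ ∂μ := by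
  obtain ⟨C, hC⟩ := hfb
  have hint : Integrable (fun y => f (y⁻¹ * x)) μ :=
    .of_bound (hfm.comp (measurable_inv.mul_const x)).aestronglyMeasurable C
      (ae_of_all _ fun _ => hC _)
  rw [mConv, ofReal_integral_eq_lintegral_ofReal hint (ae_of_all _ fun _ => hf0 _)]
  simp only [Real.enorm_eq_ofReal_abs, abs_of_nonneg (hf0 _)]

theorem abs_le_mConv_measureConv {ν μ : Measure G} [IsFiniteMeasure ν] [IsFiniteMeasure μ]
    [μ.Regular] {f v h : G → ℝ} (hfm : Measurable f) (hfb : IsBdd f) (hf0 : ∀ x, 0 ≤ f x)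
    (hhv : ∀ x, |h x| ≤ mConv ν v x) (hvf : ∀ x, |v x| ≤ mConv μ f x) (x : G) :
    |h x| ≤ mConv (measureConv ν μ) f x := by
  rw [← ENNReal.ofReal_le_ofReal_iff (q := mConv _ f x) (integral_nonneg fun _ => hf0 _),
    ofReal_mConv_eq_lintegral _ hfm hfb hf0,
    lintegral_measureConv ν μ (F := fun w => ‖f (w⁻¹ * x)‖ₑ)
      (hfm.comp (measurable_inv.mul_const x)).enorm]
  have hle : ∀ u, ‖v u‖ₑ ≤ ‖mConv μ f u‖ₑ := fun u => by
    simp only [Real.enorm_eq_ofReal_abs]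
    exact ENNReal.ofReal_le_ofReal ((hvf u).trans (le_abs_self _))
  calc ENNReal.ofReal |h x| ≤ ‖mConv ν v x‖ₑ := by
        rw [Real.enorm_eq_ofReal_abs]
        exact ENNReal.ofReal_le_ofReal ((hhv x).trans (le_abs_self _))
    _ ≤ ∫⁻ y, ‖v (y⁻¹ * x)‖ₑ ∂ν := enorm_mConv_le ν v x
    _ ≤ ∫⁻ y, ∫⁻ z, ‖f (z⁻¹ * (y⁻¹ * x))‖ₑ ∂μ ∂ν :=
        lintegral_mono fun y => (hle _).trans (enorm_mConv_le μ f _)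
    _ = ∫⁻ y, ∫⁻ z, ‖f ((y * z)⁻¹ * x)‖ₑ ∂μ ∂ν := by simp only [mul_inv_rev, mul_assoc]

end Group

theorem statement_9_general [Group G] [TopologicalSpace G] [IsTopologicalGroup G] [LocallyCompactSpace G]
    [T2Space G] [MeasurableSpace G] [BorelSpace G]
    (f v h : G → ℝ)
    (hfm : Measurable f) (hfb : IsBdd f) (hf0 : ∀ x, 0 ≤ f x)
    (hhv : MDom v h) (hvf : MDom f v) :
    MDom f h ∧ pBar f h ≤ pBar v h * pBar f v := by
  have hconv : ∀ {ν μ : Measure G}, MComp ν → MComp μ → (∀ x, |h x| ≤ mConv ν v x) →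
      (∀ x, |v x| ≤ mConv μ f x) →
      MComp (measureConv ν μ) ∧ (∀ x, |h x| ≤ mConv (measureConv ν μ) f x) ∧
        (measureConv ν μ univ).toReal = (ν univ).toReal * (μ univ).toReal := by
    intro ν μ hν hμ hνh hμv
    have := hν.1; have := hμ.1; have := hμ.2.1
    exact ⟨MComp.measureConv hν hμ, abs_le_mConv_measureConv hfm hfb hf0 hνh hμv,
      by rw [measureConv_univ, ENNReal.toReal_mul]⟩
  obtain ⟨ν, hν, hνh⟩ := hhv
  obtain ⟨μ, hμ, hμv⟩ := hvf
  obtain ⟨hκ, hκh, -⟩ := hconv hν hμ hνh hμv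
  refine ⟨⟨_, hκ, hκh⟩, Real.le_sInf_mul_sInf ⟨_, ν, hν, hνh, rfl⟩ ⟨_, μ, hμ, hμv, rfl⟩
    (by rintro _ ⟨_, _, _, rfl⟩; exact ENNReal.toReal_nonneg)
    (by rintro _ ⟨_, _, _, rfl⟩; exact ENNReal.toReal_nonneg) ?_⟩
  rintro _ ⟨ν', hν', hν'h, rfl⟩ _ ⟨μ', hμ', hμ'v, rfl⟩
  obtain ⟨hκ', hκ'h, hmass⟩ := hconv hν' hμ' hν'h hμ'v
  exact hmass ▸ pBar_le hκ' hκ'h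

theorem statement_9 [Group G] [TopologicalSpace G] [IsTopologicalGroup G] [LocallyCompactSpace G]
    [T2Space G] [MeasurableSpace G] [BorelSpace G]
    (f v h : G → ℝ)
    (hfm : Measurable f) (hfb : IsBdd f) (hf0 : ∀ x, 0 ≤ f x)
    (hvm : Measurable v) (hvb : IsBdd v) (hv0 : ∀ x, 0 ≤ v x)
    (hhm : Measurable h) (hhb : IsBdd h)
    (hhv : MDom v h) (hvf : MDom f v) :
    MDom f h ∧ pBar f h ≤ pBar v h * pBar f v :=
  statement_9_general f v h hfm hfb hf0 hhv hvf
end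

section
/- Let f, F, h : G → ℝ be bounded Borel measurable functions with f and F nonnegative. If h is G-dominated by F and F is measurably dominated by f, then h is measurably dominated by f and p̄_f(h) ≤ p_F(h) · p̄_f(F), i.e., inf{μ(G) : μ ∈ M_00(G)_+, |h| ≤ μ*f} ≤ (inf{∑_j t_j : t_j ≥ 0, g_j ∈ G, |h| ≤ ∑_j t_j (g_j·F)}) · (inf{λ(G) : λ ∈ M_00(G)_+, |F| ≤ λ*f}). In particular, convergence of a net in p_F-norm implies its convergence in p̄_f-norm. -/
open MeasureTheory Topology Pointwise
open scoped ENNReal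

variable {G : Type*}

/-!
If `|h| ≤ ∑ⱼ tⱼ F(gⱼ⁻¹ ·)` and `|F| ≤ λ * f`, then, since `(λ * f)(g⁻¹ x) = ((g ·)₊λ * f)(x)`,
the measure `ν = ∑ⱼ tⱼ (gⱼ ·)₊λ` satisfies `|h| ≤ ν * f`; it is again regular with compact
support, and `ν(G) = (∑ⱼ tⱼ) λ(G)`. Taking the infimum over both dominations gives the bound.
-/

namespace MeasureTheory.Measure

variable {α : Type*} [MeasurableSpace α] {μ ν : Measure α}

theorem InnerRegularWRT.add {p q : Set α → Prop} (hp : ∀ K K', p K → p K' → p (K ∪ K'))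
    (hμ : μ.InnerRegularWRT p q) (hν : ν.InnerRegularWRT p q) :
    (μ + ν).InnerRegularWRT p q := by
  intro U hU r hr
  rw [coe_add, Pi.add_apply] at hr
  rcases eq_or_ne (μ U) 0 with hμU | hμU
  · obtain ⟨K, hKU, hK, hrK⟩ := hν hU r (by simpa [hμU] using hr)
    exact ⟨K, hKU, hK, hrK.trans_le le_add_self⟩
  rcases eq_or_ne (ν U) 0 with hνU | hνU
  · obtain ⟨K, hKU, hK, hrK⟩ := hμ hU r (by simpa [hνU] using hr)
    exact ⟨K, hKU, hK, hrK.trans_le le_self_add⟩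
  obtain ⟨u, hu, v, hv, huv⟩ := ENNReal.exists_lt_add_of_lt_add hr hμU hνU
  obtain ⟨K, hKU, hK, huK⟩ := hμ hU u hu
  obtain ⟨K', hK'U, hK', hvK'⟩ := hν hU v hv
  refine ⟨K ∪ K', Set.union_subset hKU hK'U, hp K K' hK hK', huv.trans ?_⟩
  exact (ENNReal.add_lt_add huK hvK').trans_le
    (add_le_add (measure_mono Set.subset_union_left) (measure_mono Set.subset_union_right))

variable [TopologicalSpace α]

instance OuterRegular.add [OuterRegular μ] [OuterRegular ν] : OuterRegular (μ + ν) := by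
  refine ⟨fun A _ r hr => ?_⟩
  obtain ⟨u, hu, v, hv, huv⟩ := ENNReal.exists_add_lt_of_add_lt hr
  obtain ⟨U, hAU, hU, hUu⟩ := A.exists_isOpen_lt_of_lt (μ := μ) u hu
  obtain ⟨V, hAV, hV, hVv⟩ := A.exists_isOpen_lt_of_lt (μ := ν) v hv
  refine ⟨U ∩ V, Set.subset_inter hAU hAV, hU.inter hV, lt_of_le_of_lt ?_ huv⟩
  exact add_le_add ((measure_mono Set.inter_subset_left).trans hUu.le)
    ((measure_mono Set.inter_subset_right).trans hVv.le)

instance Regular.add [Regular μ] [Regular ν] : Regular (μ + ν) where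
  lt_top_of_isCompact _ hK := ENNReal.add_lt_top.2 ⟨hK.measure_lt_top, hK.measure_lt_top⟩
  innerRegular := Regular.innerRegular.add (fun _ _ => IsCompact.union) Regular.innerRegular

end MeasureTheory.Measure

section MComp

open MeasureTheory.Measure

variable [TopologicalSpace G] [MeasurableSpace G]

theorem MComp.zero : MComp (0 : Measure G) :=
  ⟨inferInstance, inferInstance, ∅, isCompact_empty, rfl⟩

theorem MComp.add {μ ν : Measure G} (hμ : MComp μ) (hν : MComp ν) : MComp (μ + ν) := by
  obtain ⟨_, _, K, hK, hμK⟩ := hμ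
  obtain ⟨_, _, L, hL, hνL⟩ := hν
  refine ⟨inferInstance, inferInstance, K ∪ L, hK.union hL, ?_⟩
  rw [coe_add, Pi.add_apply, measure_mono_null (by simp) hμK, measure_mono_null (by simp) hνL,
    add_zero]

theorem MComp.smul {μ : Measure G} (hμ : MComp μ) (c : NNReal) : MComp (c • μ) := by
  obtain ⟨_, _, K, hK, hμK⟩ := hμ
  exact ⟨inferInstance, inferInstance, K, hK, by simp [hμK]⟩

theorem MComp.finset_sum {ι : Type*} (s : Finset ι) {μ : ι → Measure G}
    (hμ : ∀ i ∈ s, MComp (μ i)) : MComp (∑ i ∈ s, μ i) :=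
  Finset.sum_induction μ MComp (fun _ _ => MComp.add) MComp.zero hμ

variable [Group G]

theorem MComp.map_mul_left [IsTopologicalGroup G] [BorelSpace G] {μ : Measure G} (hμ : MComp μ)
    (g : G) : MComp (μ.map (g * ·)) := by
  obtain ⟨_, _, K, hK, hμK⟩ := hμ
  refine ⟨inferInstance, Regular.map (Homeomorph.mulLeft g), (g * ·) '' K,
    hK.image (continuous_const_mul g), ?_⟩
  rw [← MeasurableEquiv.coe_mulLeft, MeasurableEquiv.map_apply]
  exact measure_mono_null (fun y hy hyK => hy ⟨y, hyK, rfl⟩) hμK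

end MComp

section Convolution

variable [Group G] [MeasurableSpace G] {f : G → ℝ}

theorem integrable_comp_inv_mul [MeasurableInv G] [MeasurableMul G] (hfm : Measurable f)
    (hfb : IsBdd f) (μ : Measure G) [IsFiniteMeasure μ] (x : G) :
    Integrable (fun y => f (y⁻¹ * x)) μ := by
  obtain ⟨C, hC⟩ := hfb
  exact (integrable_const C).mono' (hfm.comp (measurable_inv.mul_const x)).aestronglyMeasurable
    (Filter.Eventually.of_forall fun y => (Real.norm_eq_abs _).trans_le (hC _))

theorem mConv_finset_sum {ι : Type*} (s : Finset ι) {μ : ι → Measure G} {x : G}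
    (hμ : ∀ i ∈ s, Integrable (fun y => f (y⁻¹ * x)) (μ i)) :
    mConv (∑ i ∈ s, μ i) f x = ∑ i ∈ s, mConv (μ i) f x :=
  integral_finsetSum_measure hμ

theorem mConv_smul (c : NNReal) (μ : Measure G) (x : G) :
    mConv (c • μ) f x = c * mConv μ f x :=
  integral_smul_nnreal_measure _ c

theorem mConv_map_mul_left [MeasurableMul G] (g : G) (μ : Measure G) (x : G) :
    mConv (μ.map (g * ·)) f x = mConv μ f (g⁻¹ * x) := by
  rw [mConv, ← MeasurableEquiv.coe_mulLeft, integral_map_equiv]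
  simp only [mConv, MeasurableEquiv.coe_mulLeft, mul_inv_rev, mul_assoc]

end Convolution

section Domination

variable [Group G] [TopologicalSpace G] [IsTopologicalGroup G] [MeasurableSpace G] [BorelSpace G]
  {f : G → ℝ}

theorem MComp.exists_mConv_eq_sum_translate (hfm : Measurable f) (hfb : IsBdd f)
    {μ : Measure G} (hμ : MComp μ) {ι : Type*} (s : Finset ι) {t : ι → ℝ} (ht : ∀ j, 0 ≤ t j)
    (g : ι → G) :
    ∃ ν : Measure G, MComp ν ∧ (∀ x, mConv ν f x = ∑ j ∈ s, t j * mConv μ f ((g j)⁻¹ * x)) ∧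
      (ν Set.univ).toReal = (∑ j ∈ s, t j) * (μ Set.univ).toReal := by
  have hν : MComp (∑ j ∈ s, (t j).toNNReal • μ.map (g j * ·)) :=
    MComp.finset_sum s fun j _ => (hμ.map_mul_left (g j)).smul _
  refine ⟨_, hν, fun x => ?_, ?_⟩
  · rw [mConv_finset_sum s fun j _ => ?_]
    · simp only [mConv_smul, mConv_map_mul_left, Real.coe_toNNReal _ (ht _)]
    · have := ((hμ.map_mul_left (g j)).smul (t j).toNNReal).1
      exact integrable_comp_inv_mul hfm hfb _ x
  · have hmap : ∀ j, μ.map (g j * ·) Set.univ = μ Set.univ := fun j => by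
      rw [Measure.map_apply (measurable_const_mul _) .univ, Set.preimage_univ]
    have := hμ.1
    simp only [Measure.coe_finsetSum, Finset.sum_apply, Measure.smul_apply, hmap, ENNReal.smul_def,
      smul_eq_mul]
    rw [ENNReal.toReal_sum fun j _ => by finiteness, Finset.sum_mul]
    simp [ht]

theorem MComp.exists_dominating_of_translate_sum (hfm : Measurable f) (hfb : IsBdd f)
    {F h : G → ℝ} {μ : Measure G} (hμ : MComp μ) (hFμ : ∀ x, |F x| ≤ mConv μ f x)
    {ι : Type*} (s : Finset ι) {t : ι → ℝ} (ht : ∀ j, 0 ≤ t j) {g : ι → G}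
    (hh : ∀ x, |h x| ≤ ∑ j ∈ s, t j * F ((g j)⁻¹ * x)) :
    ∃ ν : Measure G, MComp ν ∧ (∀ x, |h x| ≤ mConv ν f x) ∧
      (ν Set.univ).toReal = (∑ j ∈ s, t j) * (μ Set.univ).toReal := by
  obtain ⟨ν, hν, hνμ, hmass⟩ := hμ.exists_mConv_eq_sum_translate hfm hfb s ht g
  refine ⟨ν, hν, fun x => ?_, hmass⟩
  rw [hνμ]
  exact (hh x).trans <| Finset.sum_le_sum fun j _ =>
    mul_le_mul_of_nonneg_left ((le_abs_self _).trans (hFμ _)) (ht j)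

end Domination

theorem Real.sInf_le_sInf_mul_sInf {S A B : Set ℝ} (hS : BddBelow S) (hA : A.Nonempty)
    (hB : B.Nonempty) (hA₀ : ∀ a ∈ A, 0 ≤ a) (hB₀ : ∀ b ∈ B, 0 ≤ b)
    (hAB : ∀ a ∈ A, ∀ b ∈ B, ∃ c ∈ S, c ≤ a * b) : sInf S ≤ sInf A * sInf B := by
  have hA_le : ∀ b ∈ B, sInf S ≤ sInf A * b := fun b hb => by
    rw [(monotone_mul_right_of_nonneg (hB₀ b hb)).map_csInf_of_continuousAt
      (continuous_mul_const b).continuousAt hA ⟨0, hA₀⟩]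
    refine le_csInf (hA.image _) (Set.forall_mem_image.2 fun a ha => ?_)
    obtain ⟨c, hc, hcab⟩ := hAB a ha b hb
    exact (csInf_le hS hc).trans hcab
  rw [(monotone_mul_left_of_nonneg (Real.sInf_nonneg hA₀)).map_csInf_of_continuousAt
    (continuous_const_mul _).continuousAt hB ⟨0, hB₀⟩]
  exact le_csInf (hB.image _) (Set.forall_mem_image.2 hA_le)

theorem statement_10_general [Group G] [TopologicalSpace G] [IsTopologicalGroup G]
    [MeasurableSpace G] [BorelSpace G]
    (f F h : G → ℝ)
    (hfm : Measurable f) (hfb : IsBdd f)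
    (hhF : GDom F h) (hFf : MDom f F) :
    MDom f h ∧ pBar f h ≤ pNorm F h * pBar f F := by
  obtain ⟨n, t, g, ht, hh⟩ := hhF
  obtain ⟨μ, hμ, hFμ⟩ := hFf
  obtain ⟨ν, hν, hhν, -⟩ := hμ.exists_dominating_of_translate_sum hfm hfb hFμ _ ht hh
  refine ⟨⟨ν, hν, hhν⟩, Real.sInf_le_sInf_mul_sInf ?_ ⟨_, n, t, g, ht, hh, rfl⟩
    ⟨_, μ, hμ, hFμ, rfl⟩ ?_ ?_ ?_⟩
  · exact ⟨0, by rintro _ ⟨_, -, -, rfl⟩; exact ENNReal.toReal_nonneg⟩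
  · rintro _ ⟨n, t, g, ht, -, rfl⟩
    exact Finset.sum_nonneg fun j _ => ht j
  · rintro _ ⟨μ, -, -, rfl⟩
    exact ENNReal.toReal_nonneg
  · rintro _ ⟨n, t, g, ht, hh, rfl⟩ _ ⟨μ, hμ, hFμ, rfl⟩
    obtain ⟨ν, hν, hhν, hmass⟩ := hμ.exists_dominating_of_translate_sum hfm hfb hFμ _ ht hh
    exact ⟨_, ⟨ν, hν, hhν, rfl⟩, hmass.le⟩

theorem statement_10 [Group G] [TopologicalSpace G] [IsTopologicalGroup G] [LocallyCompactSpace G]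
    [T2Space G] [MeasurableSpace G] [BorelSpace G]
    (f F h : G → ℝ)
    (hfm : Measurable f) (hfb : IsBdd f) (hf0 : ∀ x, 0 ≤ f x)
    (hFm : Measurable F) (hFb : IsBdd F) (hF0 : ∀ x, 0 ≤ F x)
    (hhm : Measurable h) (hhb : IsBdd h)
    (hhF : GDom F h) (hFf : MDom f F) :
    MDom f h ∧ pBar f h ≤ pNorm F h * pBar f F :=
  statement_10_general f F h hfm hfb hhF hFf
end

section
/- Let f ∈ C_ru^b(G) be nonnegative and not identically zero, and let φ ∈ C_00(G) be nonnegative and not identically zero. Then for every h : G → ℝ that is G-dominated by φ*f, one has p_{φ*f}(h) = p̄_{φ*f}(h), i.e., inf{∑_j t_j : t_j ≥ 0, g_j ∈ G, |h| ≤ ∑_j t_j (g_j·(φ*f))} = inf{λ(G) : λ ∈ M_00(G)_+, |h| ≤ λ*(φ*f)}. -/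
/-!
A `G`-domination `∑ⱼ tⱼ F(gⱼ⁻¹ ·)` is the convolution of `F` with the point masses
`∑ⱼ tⱼ δ_{gⱼ}`, so `p̄ ≤ p`. For the converse, the key property of `F = φ * f` is that a small left
translation changes it by at most `ε ∑_{a ∈ s} F(a⁻¹ ·)` for a fixed finite `s ⊆ G`. This is
inherited from `φ`, which is uniformly continuous and whose slightly enlarged support is covered
by finitely many translates of `{φ > c}`. Partitioning the compact support of `λ` into pieces
`Eᵢ ⊆ gᵢ U` then gives `λ * F ≤ ∑ᵢ λ(Eᵢ) (F(gᵢ⁻¹ ·) + ε ∑ₐ F((gᵢ a)⁻¹ ·))`, a `G`-domination of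
total weight at most `λ(G) (1 + ε |s|)`.
-/

open MeasureTheory Topology Pointwise
open scoped ENNReal

variable {G : Type*}

open Function

section FiniteSupport

variable {X : Type*} [TopologicalSpace X] [T1Space X] [MeasurableSpace X]

theorem MeasureTheory.Measure.regular_of_measure_compl_eq_zero {μ : Measure X}
    [IsFiniteMeasure μ] {S : Set X} (hS : S.Finite) (hμS : μ Sᶜ = 0) : μ.Regular := by
  have le_of_diff_subset {s t : Set X} (h : s \ t ⊆ Sᶜ) : μ s ≤ μ t :=
    measure_mono_ae (ae_le_set.2 (measure_mono_null h hμS))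
  have : μ.OuterRegular := ⟨fun A _ r hr => ⟨(S \ A)ᶜ, fun x hx hxS => hxS.2 hx,
    hS.sdiff.isClosed.isOpen_compl,
    (le_of_diff_subset (s := (S \ A)ᶜ) (t := A) fun x hx hxS => hx.1 ⟨hxS, hx.2⟩).trans_lt hr⟩⟩
  exact ⟨fun V _ r hr => ⟨V ∩ S, Set.inter_subset_left, (hS.inter_of_right V).isCompact,
    hr.trans_le (le_of_diff_subset fun x hx hxS => hx.2 ⟨hx.1, hxS⟩)⟩⟩

end FiniteSupport

section Domination

variable [Group G]

theorem pNorm_le_sum {F h : G → ℝ} {ι : Type*} [Fintype ι] {t : ι → ℝ} {g : ι → G}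
    (ht : ∀ j, 0 ≤ t j) (hd : ∀ x, |h x| ≤ ∑ j, t j * F ((g j)⁻¹ * x)) :
    pNorm F h ≤ ∑ j, t j := by
  refine csInf_le ⟨0, ?_⟩ ⟨Fintype.card ι, t ∘ (Fintype.equivFin ι).symm,
    g ∘ (Fintype.equivFin ι).symm, fun j => ht _, fun x => ?_, ?_⟩
  · rintro s ⟨n, t, g, ht, -, rfl⟩
    exact Finset.sum_nonneg fun j _ => ht j
  · simpa only [Function.comp_apply, Equiv.sum_comp (Fintype.equivFin ι).symm
      (fun i => t i * F ((g i)⁻¹ * x))] using hd x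
  · exact (Equiv.sum_comp (Fintype.equivFin ι).symm t).symm

theorem le_pNorm {F h : G → ℝ} (hdom : GDom F h) {b : ℝ}
    (hb : ∀ (n : ℕ) (t : Fin n → ℝ) (g : Fin n → G), (∀ j, 0 ≤ t j) →
      (∀ x, |h x| ≤ ∑ j, t j * F ((g j)⁻¹ * x)) → b ≤ ∑ j, t j) :
    b ≤ pNorm F h := by
  obtain ⟨n, t, g, ht, hd⟩ := hdom
  refine le_csInf ⟨_, n, t, g, ht, hd, rfl⟩ ?_
  rintro s ⟨n, t, g, ht, hd, rfl⟩
  exact hb n t g ht hd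

variable [TopologicalSpace G] [MeasurableSpace G]

theorem pBar_le_measureReal {F h : G → ℝ} {μ : Measure G} (hμ : MComp μ)
    (hd : ∀ x, |h x| ≤ mConv μ F x) : pBar F h ≤ μ.real Set.univ := by
  refine csInf_le ⟨0, ?_⟩ ⟨μ, hμ, hd, rfl⟩
  rintro s ⟨μ, -, -, rfl⟩
  exact ENNReal.toReal_nonneg

theorem le_pBar {F h : G → ℝ} (hdom : MDom F h) {b : ℝ}
    (hb : ∀ μ : Measure G, MComp μ → (∀ x, |h x| ≤ mConv μ F x) → b ≤ μ.real Set.univ) :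
    b ≤ pBar F h := by
  obtain ⟨μ, hμ, hd⟩ := hdom
  refine le_csInf ⟨_, μ, hμ, hd, rfl⟩ ?_
  rintro s ⟨μ, hμ, hd, rfl⟩
  exact hb μ hμ hd

variable [T1Space G] [OpensMeasurableSpace G]

theorem exists_mComp_mConv_eq_sum (F : G → ℝ) {ι : Type*} [Fintype ι] {t : ι → ℝ}
    (ht : ∀ j, 0 ≤ t j) (g : ι → G) :
    ∃ μ : Measure G, MComp μ ∧ (∀ x, mConv μ F x = ∑ j, t j * F ((g j)⁻¹ * x)) ∧
      μ.real Set.univ = ∑ j, t j := by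
  set μ : Measure G := ∑ j, ENNReal.ofReal (t j) • Measure.dirac (g j)
  have hμ (s : Set G) : μ s = ∑ j, ENNReal.ofReal (t j) * s.indicator 1 (g j) := by
    simp [μ, Measure.dirac_apply]
  have : IsFiniteMeasure μ := ⟨by
    rw [hμ]
    exact ENNReal.sum_lt_top.2 fun j _ => ENNReal.mul_lt_top ENNReal.ofReal_lt_top
      (by simp)⟩
  have hsupp : μ (Set.range g)ᶜ = 0 := by simp [hμ]
  refine ⟨μ, ⟨this, Measure.regular_of_measure_compl_eq_zero (Set.finite_range g) hsupp,
    Set.range g, (Set.finite_range g).isCompact, hsupp⟩, fun x => ?_, ?_⟩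
  · rw [mConv, integral_finsetSum_measure fun j _ =>
      (integrable_dirac (by simp)).smul_measure ENNReal.ofReal_ne_top]
    simp [integral_smul_measure, integral_dirac, ENNReal.toReal_ofReal (ht _)]
  · rw [measureReal_def, hμ, ENNReal.toReal_sum fun j _ => by simp]
    simp [ENNReal.toReal_ofReal (ht _)]

theorem GDom.mDom {F h : G → ℝ} (hdom : GDom F h) : MDom F h := by
  obtain ⟨n, t, g, ht, hd⟩ := hdom
  obtain ⟨μ, hμ, hconv, -⟩ := exists_mComp_mConv_eq_sum F ht g
  exact ⟨μ, hμ, fun x => (hconv x).symm ▸ hd x⟩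

theorem pBar_le_pNorm {F h : G → ℝ} (hdom : GDom F h) : pBar F h ≤ pNorm F h := by
  refine le_pNorm hdom fun n t g ht hd => ?_
  obtain ⟨μ, hμ, hconv, hmass⟩ := exists_mComp_mConv_eq_sum F ht g
  exact hmass ▸ pBar_le_measureReal hμ fun x => (hconv x).symm ▸ hd x

end Domination

section Oscillation

variable [Group G] [TopologicalSpace G]

def HasDominatedOscillation (F : G → ℝ) : Prop :=
  ∃ s : Finset G, ∀ ε > 0, ∃ U ∈ 𝓝 (1 : G), ∀ u ∈ U, ∀ x,
    |F (u⁻¹ * x) - F x| ≤ ε * ∑ a ∈ s, F (a⁻¹ * x)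

variable [IsTopologicalGroup G]

theorem HasDominatedOscillation.continuous {F : G → ℝ} (hF : HasDominatedOscillation F) :
    Continuous F := by
  obtain ⟨s, hs⟩ := hF
  refine continuous_iff_continuousAt.2 fun p => Metric.tendsto_nhds.2 fun δ hδ => ?_
  set R := ∑ a ∈ s, F (a⁻¹ * p)
  obtain ⟨U, hU, hUF⟩ := hs (δ / (|R| + 1)) (by positivity)
  have hpU : ∀ᶠ x in 𝓝 p, p * x⁻¹ ∈ U :=
    (continuous_const.mul continuous_inv).continuousAt.preimage_mem_nhds (by simpa using hU)
  filter_upwards [hpU] with x hx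
  have hx' := hUF _ hx p
  rw [show (p * x⁻¹)⁻¹ * p = x by group] at hx'
  rw [Real.dist_eq]
  calc |F x - F p| ≤ δ / (|R| + 1) * |R| :=
        hx'.trans (mul_le_mul_of_nonneg_left (le_abs_self R) (by positivity))
    _ < δ := by
        rw [div_mul_eq_mul_div, div_lt_iff₀ (by positivity)]
        nlinarith [abs_nonneg R]

variable [MeasurableSpace G] [OpensMeasurableSpace G]

theorem IsCompact.exists_measurable_partition_translates {K V : Set G} (hK : IsCompact K)
    (hV : IsOpen V) (h1 : (1 : G) ∈ V) :
    ∃ (n : ℕ) (g : Fin n → G) (E : Fin n → Set G), (∀ i, MeasurableSet (E i)) ∧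
      Pairwise (Disjoint on E) ∧ (∀ i, E i ⊆ g i • V) ∧ K ⊆ ⋃ i, E i := by
  obtain ⟨T, hT⟩ := hK.elim_finite_subcover (fun y : G => y • V) (fun y => hV.smul y)
    fun z _ => Set.mem_iUnion.2 ⟨z, Set.mem_smul_set_iff_inv_smul_mem.2 (by simpa using h1)⟩
  set g : Fin T.card → G := fun i => T.equivFin.symm i
  refine ⟨T.card, g, disjointed fun i => g i • V,
    fun i => disjointedRec (fun _ _ ht => ht.diff (hV.smul _).measurableSet)
      (hV.smul _).measurableSet,
    disjoint_disjointed _, disjointed_subset _, ?_⟩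
  rw [iUnion_disjointed]
  intro z hz
  obtain ⟨y, hy, hzy⟩ := Set.mem_iUnion₂.1 (hT hz)
  exact Set.mem_iUnion.2 ⟨T.equivFin ⟨y, hy⟩, by simpa [g] using hzy⟩

end Oscillation

theorem integral_le_sum_measureReal_mul {α ι : Type*} [MeasurableSpace α] [Fintype ι]
    {μ : Measure α} [IsFiniteMeasure μ] {E : ι → Set α} (hE : ∀ i, MeasurableSet (E i))
    (hdisj : Pairwise (Disjoint on E)) (hcover : μ (⋃ i, E i)ᶜ = 0) {f : α → ℝ}
    (hf : Integrable f μ) {b : ι → ℝ} (hb : ∀ i, ∀ x ∈ E i, f x ≤ b i) :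
    ∫ x, f x ∂μ ≤ ∑ i, μ.real (E i) * b i := by
  calc ∫ x, f x ∂μ = ∑ i, ∫ x in E i, f x ∂μ := by
        rw [← integral_iUnion_fintype hE hdisj fun i => hf.integrableOn,
          Measure.restrict_eq_self_of_ae_mem (s := ⋃ i, E i) (mem_ae_iff.2 hcover)]
    _ ≤ ∑ i, ∫ _ in E i, b i ∂μ := Finset.sum_le_sum fun i _ =>
        setIntegral_mono_on hf.integrableOn (integrableOn_const (measure_ne_top μ _)) (hE i) (hb i)
    _ = ∑ i, μ.real (E i) * b i := by simp

section Discretization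

variable [Group G] [TopologicalSpace G] [IsTopologicalGroup G] [T2Space G]
  [MeasurableSpace G] [OpensMeasurableSpace G]

theorem mConv_le_sum_translates {F : G → ℝ} (hFc : Continuous F) {s : Finset G} {ε : ℝ}
    {U : Set G} (hU : U ∈ 𝓝 (1 : G))
    (hUF : ∀ u ∈ U, ∀ x, |F (u⁻¹ * x) - F x| ≤ ε * ∑ a ∈ s, F (a⁻¹ * x))
    {μ : Measure G} [IsFiniteMeasure μ] {K : Set G} (hK : IsCompact K) (hμK : μ Kᶜ = 0) :
    ∃ (n : ℕ) (g : Fin n → G) (c : Fin n → ℝ), (∀ i, 0 ≤ c i) ∧ ∑ i, c i ≤ μ.real Set.univ ∧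
      ∀ x, mConv μ F x ≤ ∑ i, c i * (F ((g i)⁻¹ * x) + ε * ∑ a ∈ s, F ((g i * a)⁻¹ * x)) := by
  obtain ⟨n, g, E, hE, hdisj, hEg, hKE⟩ :=
    hK.exists_measurable_partition_translates isOpen_interior (mem_interior_iff_mem_nhds.2 hU)
  refine ⟨n, g, fun i => μ.real (E i), fun i => measureReal_nonneg, ?_, fun x => ?_⟩
  · rw [← measureReal_iUnion_fintype hdisj hE]
    exact measureReal_mono (Set.subset_univ _)
  have hint : Integrable (fun y => F (y⁻¹ * x)) μ := by
    rw [← Measure.restrict_eq_self_of_ae_mem (mem_ae_iff.2 hμK)]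
    exact (hFc.comp (by fun_prop)).continuousOn.integrableOn_compact hK
  refine integral_le_sum_measureReal_mul hE hdisj
    (measure_mono_null (Set.compl_subset_compl.2 hKE) hμK) hint fun i y hy => ?_
  obtain ⟨v, hv, rfl⟩ := hEg i hy
  have hosc := hUF v (interior_subset hv) ((g i)⁻¹ * x)
  simp only [smul_eq_mul, mul_inv_rev, mul_assoc] at hosc ⊢
  linarith [le_abs_self (F (v⁻¹ * ((g i)⁻¹ * x)) - F ((g i)⁻¹ * x))]

theorem HasDominatedOscillation.pNorm_le_measureReal {F h : G → ℝ}
    (hF : HasDominatedOscillation F) {μ : Measure G} (hμ : MComp μ)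
    (hd : ∀ x, |h x| ≤ mConv μ F x) : pNorm F h ≤ μ.real Set.univ := by
  have hFc := hF.continuous
  obtain ⟨s, hs⟩ := hF
  obtain ⟨hfin, -, K, hK, hμK⟩ := hμ
  set M := μ.real Set.univ
  refine le_of_forall_pos_le_add fun δ hδ => ?_
  set ε := δ / (M * s.card + 1)
  have hε : 0 < ε := by positivity
  obtain ⟨U, hU, hUF⟩ := hs ε hε
  obtain ⟨n, g, c, hc, hcM, hconv⟩ := mConv_le_sum_translates hFc hU hUF hK hμK
  calc pNorm F h ≤ ∑ j, Sum.elim c (fun p : Fin n × s => c p.1 * ε) j :=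
        pNorm_le_sum (g := Sum.elim g fun p => g p.1 * p.2) ?_ fun x => (hd x).trans ?_
    _ = (∑ i, c i) * (1 + ε * s.card) := by
        simp [Fintype.sum_sum_type, Fintype.sum_prod_type, Finset.sum_mul, mul_add,
          mul_comm, mul_left_comm]
    _ ≤ M * (1 + ε * s.card) := by gcongr
    _ ≤ M + δ := by
        have hM : 0 ≤ M := measureReal_nonneg
        have : M * (ε * s.card) ≤ δ := by
          rw [show M * (ε * s.card) = δ * (M * s.card / (M * s.card + 1)) by ring]
          exact mul_le_of_le_one_right hδ.le
            ((div_le_one (by positivity)).2 (by linarith))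
        linarith
  · rintro (i | ⟨i, a⟩)
    · exact hc i
    · exact mul_nonneg (hc i) hε.le
  · refine (hconv x).trans_eq ?_
    rw [Fintype.sum_sum_type, Fintype.sum_prod_type, ← Finset.sum_add_distrib]
    refine Finset.sum_congr rfl fun i _ => ?_
    simp only [Sum.elim_inl, Sum.elim_inr,
      Finset.sum_coe_sort s fun a => c i * ε * F ((g i * a)⁻¹ * x)]
    rw [mul_add, Finset.mul_sum, Finset.mul_sum]
    simp only [mul_assoc]

theorem pNorm_eq_pBar_of_hasDominatedOscillation {F h : G → ℝ}
    (hF : HasDominatedOscillation F) (hdom : GDom F h) : pNorm F h = pBar F h :=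
  le_antisymm (le_pBar hdom.mDom fun _ hμ hd => hF.pNorm_le_measureReal hμ hd)
    (pBar_le_pNorm hdom)

end Discretization

section Convolution

variable [Group G] [TopologicalSpace G] [IsTopologicalGroup G]

theorem HasCompactSupport.exists_nhds_one_abs_sub_le {φ : G → ℝ} (hφc : Continuous φ)
    (hφs : HasCompactSupport φ) {ε : ℝ} (hε : 0 < ε) :
    ∃ U ∈ 𝓝 (1 : G), ∀ u ∈ U, ∀ z, |φ (u⁻¹ * z) - φ z| ≤ ε := by
  let := IsTopologicalGroup.rightUniformSpace G
  obtain ⟨U, hU, hUε⟩ := Filter.mem_comap.1 <| uniformContinuous_def.1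
    (hφs.uniformContinuous_of_continuous hφc) _ (Metric.dist_mem_uniformity hε)
  refine ⟨U⁻¹, inv_mem_nhds_one G hU, fun u hu z => ?_⟩
  have := @hUε (z, u⁻¹ * z) (by simpa [mul_assoc] using hu)
  simpa [Real.dist_eq, abs_sub_comm] using (this : dist (φ z) (φ (u⁻¹ * z)) < ε).le

theorem IsCompact.exists_pos_le_sum_translates {φ : G → ℝ} (hφc : Continuous φ)
    (hφ0 : ∀ x, 0 ≤ φ x) (hφne : φ ≠ 0) {K : Set G} (hK : IsCompact K) :
    ∃ (s : Finset G) (c : ℝ), 0 < c ∧ ∀ z ∈ K, c ≤ ∑ a ∈ s, φ (a⁻¹ * z) := by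
  obtain ⟨x₀, hx₀⟩ := Function.ne_iff.1 hφne
  have hpos : 0 < φ x₀ := (hφ0 x₀).lt_of_ne' hx₀
  obtain ⟨s, hs⟩ := hK.elim_finite_subcover (fun y : G => y • φ ⁻¹' Set.Ioi (φ x₀ / 2))
    (fun y => (isOpen_Ioi.preimage hφc).smul y) fun z _ => Set.mem_iUnion.2
      ⟨z * x₀⁻¹, Set.mem_smul_set_iff_inv_smul_mem.2 (by simpa using half_lt_self hpos)⟩
  refine ⟨s, φ x₀ / 2, half_pos hpos, fun z hz => ?_⟩
  obtain ⟨a, ha, hza⟩ := Set.mem_iUnion₂.1 (hs hz)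
  exact (Set.mem_smul_set_iff_inv_smul_mem.1 hza).le.trans
    (Finset.single_le_sum (fun b _ => hφ0 (b⁻¹ * z)) ha)

theorem HasCompactSupport.hasDominatedOscillation [LocallyCompactSpace G] {φ : G → ℝ}
    (hφc : Continuous φ) (hφs : HasCompactSupport φ) (hφ0 : ∀ x, 0 ≤ φ x) (hφne : φ ≠ 0) :
    HasDominatedOscillation φ := by
  obtain ⟨C, hC, hC1⟩ := exists_compact_mem_nhds (1 : G)
  obtain ⟨s, c, hc, hsc⟩ := (hC.mul hφs.isCompact).exists_pos_le_sum_translates hφc hφ0 hφne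
  refine ⟨s, fun ε hε => ?_⟩
  obtain ⟨U, hU, hUφ⟩ := hφs.exists_nhds_one_abs_sub_le hφc (mul_pos hε hc)
  refine ⟨U ∩ C, Filter.inter_mem hU hC1, fun u hu z => ?_⟩
  by_cases hz : z ∈ C * tsupport φ
  · exact (hUφ u hu.1 z).trans (mul_le_mul_of_nonneg_left (hsc z hz) hε.le)
  have h1 : φ z = 0 := image_eq_zero_of_notMem_tsupport fun hzs =>
    hz (by simpa using Set.mul_mem_mul (mem_of_mem_nhds hC1) hzs)
  have h2 : φ (u⁻¹ * z) = 0 := image_eq_zero_of_notMem_tsupport fun hzs =>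
    hz (by simpa using Set.mul_mem_mul hu.2 hzs)
  rw [h1, h2, sub_zero, abs_zero]
  exact mul_nonneg hε.le (Finset.sum_nonneg fun a _ => hφ0 _)

variable [MeasurableSpace G] [BorelSpace G] (m : Measure G)

theorem fConv_inv_mul_apply [m.IsMulLeftInvariant] (φ f : G → ℝ) (a x : G) :
    fConv m φ f (a⁻¹ * x) = ∫ z, φ (a⁻¹ * z) * f (z⁻¹ * x) ∂m := by
  rw [fConv, ← integral_mul_left_eq_self (fun z => φ (a⁻¹ * z) * f (z⁻¹ * x)) a]
  simp [mul_assoc]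

theorem integrable_translate_mul_comp_inv_mul [IsFiniteMeasureOnCompacts m] {φ f : G → ℝ}
    (hφc : Continuous φ) (hφs : HasCompactSupport φ) (hfc : Continuous f) (a x : G) :
    Integrable (fun z => φ (a⁻¹ * z) * f (z⁻¹ * x)) m :=
  Continuous.integrable_of_hasCompactSupport (by fun_prop)
    (hφs.comp_homeomorph (Homeomorph.mulLeft a⁻¹)).mul_right

theorem hasDominatedOscillation_fConv [m.IsMulLeftInvariant] [IsFiniteMeasureOnCompacts m]
    {φ f : G → ℝ} (hφ : HasDominatedOscillation φ)
    (hφc : Continuous φ) (hφs : HasCompactSupport φ) (hfc : Continuous f)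
    (hf0 : ∀ x, 0 ≤ f x) : HasDominatedOscillation (fConv m φ f) := by
  obtain ⟨s, hs⟩ := hφ
  refine ⟨s, fun ε hε => ?_⟩
  obtain ⟨U, hU, hUφ⟩ := hs ε hε
  refine ⟨U, hU, fun u hu x => ?_⟩
  have hint := integrable_translate_mul_comp_inv_mul m hφc hφs hfc (x := x)
  calc |fConv m φ f (u⁻¹ * x) - fConv m φ f x|
      = |∫ z, (φ (u⁻¹ * z) - φ z) * f (z⁻¹ * x) ∂m| := by
        rw [fConv_inv_mul_apply, fConv, ← integral_sub (hint u) (by simpa using hint 1)]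
        simp only [sub_mul]
    _ ≤ ∫ z, |φ (u⁻¹ * z) - φ z| * f (z⁻¹ * x) ∂m := by
        refine abs_integral_le_integral_abs.trans_eq (integral_congr_ae (ae_of_all _ fun z => ?_))
        simp only [abs_mul, abs_of_nonneg (hf0 _)]
    _ ≤ ∫ z, ε * ∑ a ∈ s, φ (a⁻¹ * z) * f (z⁻¹ * x) ∂m := by
        refine integral_mono_of_nonneg (ae_of_all _ fun z => mul_nonneg (abs_nonneg _) (hf0 _))
          ((integrable_finsetSum _ fun a _ => hint a).const_mul ε) (ae_of_all _ fun z => ?_)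
        dsimp only
        rw [← Finset.sum_mul, ← mul_assoc]
        exact mul_le_mul_of_nonneg_right (hUφ u hu z) (hf0 _)
    _ = ε * ∑ a ∈ s, fConv m φ f (a⁻¹ * x) := by
        rw [integral_const_mul, integral_finsetSum _ fun a _ => hint a]
        simp only [fConv_inv_mul_apply]

end Convolution

theorem statement_11_general [Group G] [TopologicalSpace G] [IsTopologicalGroup G] [LocallyCompactSpace G]
    [T2Space G] [MeasurableSpace G] [BorelSpace G]
    (m : Measure G) [m.IsHaarMeasure]
    (f : G → ℝ) (hf : RUCb f) (hf0 : ∀ x, 0 ≤ f x)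
    (φ : G → ℝ) (hφc : Continuous φ) (hφs : HasCompactSupport φ)
    (hφ0 : ∀ x, 0 ≤ φ x) (hφne : φ ≠ 0)
    (h : G → ℝ) (hdom : GDom (fConv m φ f) h) :
    pNorm (fConv m φ f) h = pBar (fConv m φ f) h := by
  obtain ⟨-, hfc, -⟩ := hf
  exact pNorm_eq_pBar_of_hasDominatedOscillation
    (hasDominatedOscillation_fConv m (hφs.hasDominatedOscillation hφc hφ0 hφne) hφc hφs hfc hf0)
    hdom

theorem statement_11 [Group G] [TopologicalSpace G] [IsTopologicalGroup G] [LocallyCompactSpace G]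
    [T2Space G] [MeasurableSpace G] [BorelSpace G]
    (m : Measure G) [m.IsHaarMeasure]
    (f : G → ℝ) (hf : RUCb f) (hf0 : ∀ x, 0 ≤ f x) (hfne : f ≠ 0)
    (φ : G → ℝ) (hφc : Continuous φ) (hφs : HasCompactSupport φ)
    (hφ0 : ∀ x, 0 ≤ φ x) (hφne : φ ≠ 0)
    (h : G → ℝ) (hdom : GDom (fConv m φ f) h) :
    pNorm (fConv m φ f) h = pBar (fConv m φ f) h :=
  statement_11_general m f hf hf0 φ hφc hφs hφ0 hφne h hdom
end
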